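/- Let G = G₁ ∪ G₂ with V(G₁) ∩ V(G₂) = {u, v}, E(G₁) ∩ E(G₂) = ∅, and τ(G) < 1. If S is a tough set with S ∩ {u, v} = ∅ and both S ∩ V(G₁) and S ∩ V(G₂) nonempty, then setting Sᵢ = S ∩ V(Gᵢ) we have |S₁| / c(G−S₁) = |S₂| / c(G−S₂) = τ(G). -/

import Mathlib

open SimpleGraph

noncomputable def numComp {V : Type*} (G : SimpleGraph V) (S : Set V) : ℕ :=
  Nat.card (SimpleGraph.induce Sᶜ G).ConnectedComponent

def IsCutset {V : Type*} (G : SimpleGraph V) (S : Set V) : Prop := 1 < numComp G S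

noncomputable def toughness {V : Type*} (G : SimpleGraph V) : ℝ :=
  sInf {r : ℝ | ∃ S : Set V, IsCutset G S ∧ r = (S.ncard : ℝ) / (numComp G S : ℝ)}

def IsToughSet {V : Type*} (G : SimpleGraph V) (S : Set V) : Prop :=
  IsCutset G S ∧ (S.ncard : ℝ) = toughness G * (numComp G S : ℝ)

def MinTough {V : Type*} (G : SimpleGraph V) (t : ℝ) : Prop :=
  toughness G = t ∧ ∀ e ∈ G.edgeSet, toughness (G.deleteEdges {e}) < t

def IsCutVertex {V : Type*} (G : SimpleGraph V) (x : V) : Prop := IsCutset G {x}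

/-!
Write `Sᵢ = S ∩ Aᵢ` and `cᵢ = c(G - Sᵢ)`. A component of `G - S` missing `u` and `v` lies on one
side of the separation and is also a component of `G - S₁` or `G - S₂`; the components through `u`
and `v` account for at most one more on each side, so `c(G - S) ≤ c₁ + c₂`. As `τ(G) < 1`, every
nonempty `Sᵢ` has `τ(G) cᵢ ≤ |Sᵢ|`, strictly unless `Sᵢ` is a cutset. Hence
`τ(G) (c₁ + c₂) ≤ |S₁| + |S₂| = |S| = τ(G) c(G - S) ≤ τ(G) (c₁ + c₂)`, and both inequalities
`τ(G) cᵢ ≤ |Sᵢ|` are equalities.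
-/

section Toughness

variable {V : Type*} {G : SimpleGraph V} {T : Set V}

theorem toughness_nonneg (G : SimpleGraph V) : 0 ≤ toughness G :=
  Real.sInf_nonneg fun _ ⟨_, _, hr⟩ => hr ▸ by positivity

theorem toughness_mul_numComp_le_ncard (hT : IsCutset G T) :
    toughness G * numComp G T ≤ T.ncard := by
  have hbdd : BddBelow {r : ℝ | ∃ S : Set V, IsCutset G S ∧ r = S.ncard / numComp G S} :=
    ⟨0, fun _ ⟨_, _, hr⟩ => hr ▸ by positivity⟩
  have hc : (0 : ℝ) < numComp G T := by exact_mod_cast (zero_lt_one.trans hT : 0 < numComp G T)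
  rw [← le_div_iff₀ hc]
  exact csInf_le hbdd ⟨T, hT, rfl⟩

theorem toughness_mul_numComp_lt_ncard_of_not_isCutset (hτ : toughness G < 1)
    (hT : ¬IsCutset G T) (hne : T.Nonempty) (hfin : T.Finite) :
    toughness G * numComp G T < T.ncard := by
  have hc : (numComp G T : ℝ) ≤ 1 := by exact_mod_cast not_lt.mp hT
  have hcard : (1 : ℝ) ≤ T.ncard := by exact_mod_cast (Set.ncard_pos hfin).mpr hne
  nlinarith [toughness_nonneg G]

theorem toughness_mul_numComp_le_ncard_of_nonempty (hτ : toughness G < 1) (hne : T.Nonempty)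
    (hfin : T.Finite) : toughness G * numComp G T ≤ T.ncard := by
  by_cases hT : IsCutset G T
  · exact toughness_mul_numComp_le_ncard hT
  · exact (toughness_mul_numComp_lt_ncard_of_not_isCutset hτ hT hne hfin).le

theorem ncard_div_numComp_eq_toughness (hτ : toughness G < 1) (hne : T.Nonempty)
    (hfin : T.Finite) (h : toughness G * numComp G T = T.ncard) :
    (T.ncard : ℝ) / numComp G T = toughness G := by
  have hT : IsCutset G T := by
    by_contra hT
    exact (toughness_mul_numComp_lt_ncard_of_not_isCutset hτ hT hne hfin).ne h
  have hc : (numComp G T : ℝ) ≠ 0 := by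
    exact_mod_cast (zero_lt_one.trans hT : 0 < numComp G T).ne'
  rw [div_eq_iff hc, h.symm, mul_comm]

end Toughness

section TwoSeparation

variable {V : Type*} {G G₁ G₂ : SimpleGraph V} {A₁ A₂ S : Set V}

theorem compl_subset_compl_inter_left : Sᶜ ⊆ (S ∩ A₁)ᶜ :=
  Set.compl_subset_compl.mpr Set.inter_subset_left

/-- A component of `G - S` through a vertex of `A₁` that avoids `A₁ ∩ A₂` can only be left
along `G₁`-edges, which end in `A₁`, where the vertices of `S` are still deleted. -/
theorem reachable_of_reachable_induce_compl_inter (hG : G = G₁ ⊔ G₂)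
    (hsupp₁ : G₁.support ⊆ A₁) (hsupp₂ : G₂.support ⊆ A₂) {z z' : ↥Sᶜ} (hzA : (z : V) ∈ A₁)
    (havoid : ∀ y, (G.induce Sᶜ).Reachable z y → (y : V) ∉ A₁ ∩ A₂)
    (h : (G.induce (S ∩ A₁)ᶜ).Reachable (Set.inclusion compl_subset_compl_inter_left z)
      (Set.inclusion compl_subset_compl_inter_left z')) :
    (G.induce Sᶜ).Reachable z z' := by
  rw [reachable_iff_reflTransGen] at h
  suffices key : ∀ y, Relation.ReflTransGen (G.induce (S ∩ A₁)ᶜ).Adj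
      (Set.inclusion compl_subset_compl_inter_left z) y →
      (y : V) ∈ A₁ ∧ ∃ hy : (y : V) ∈ Sᶜ, (G.induce Sᶜ).Reachable z ⟨y, hy⟩ by
    obtain ⟨-, _, hz'⟩ := key _ h
    exact hz'
  intro y hy
  induction hy with
  | refl => exact ⟨hzA, z.2, Reachable.refl _⟩
  | @tail a b _ hab ih =>
    obtain ⟨haA₁, ha, hza⟩ := ih
    have haA₂ : (a : V) ∉ A₂ := fun haA₂ => havoid _ hza ⟨haA₁, haA₂⟩
    have hab₁ : G₁.Adj a b := by
      have hab : (G₁ ⊔ G₂).Adj a b := hG ▸ hab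
      exact hab.resolve_right fun hab₂ => haA₂ (hsupp₂ ⟨_, hab₂⟩)
    have hbA₁ : (b : V) ∈ A₁ := hsupp₁ ⟨_, hab₁.symm⟩
    exact ⟨hbA₁, fun hbS => b.2 ⟨hbS, hbA₁⟩, hza.trans (Adj.reachable (G := G.induce Sᶜ) hab)⟩

theorem reachable_of_reachable_induce_compl_inter_of_anchor (hG : G = G₁ ⊔ G₂)
    (hsupp₁ : G₁.support ⊆ A₁) (hsupp₂ : G₂.support ⊆ A₂) {a z z' : ↥Sᶜ}
    (hz : (G.induce Sᶜ).Reachable z a ∨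
      (z : V) ∈ A₁ ∧ ∀ y, (G.induce Sᶜ).Reachable z y → (y : V) ∉ A₁ ∩ A₂)
    (hz' : (G.induce Sᶜ).Reachable z' a ∨
      (z' : V) ∈ A₁ ∧ ∀ y, (G.induce Sᶜ).Reachable z' y → (y : V) ∉ A₁ ∩ A₂)
    (h : (G.induce (S ∩ A₁)ᶜ).Reachable (Set.inclusion compl_subset_compl_inter_left z)
      (Set.inclusion compl_subset_compl_inter_left z')) :
    (G.induce Sᶜ).Reachable z z' := by
  rcases hz with hza | ⟨hzA, hzavoid⟩
  · rcases hz' with hz'a | ⟨hz'A, hz'avoid⟩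
    · exact hza.trans hz'a.symm
    · exact (reachable_of_reachable_induce_compl_inter hG hsupp₁ hsupp₂ hz'A hz'avoid h.symm).symm
  · exact reachable_of_reachable_induce_compl_inter hG hsupp₁ hsupp₂ hzA hzavoid h

theorem numComp_le_numComp_inter_add_numComp_inter [Finite V] {u v : V} (hG : G = G₁ ⊔ G₂)
    (hsupp₁ : G₁.support ⊆ A₁) (hsupp₂ : G₂.support ⊆ A₂) (hAint : A₁ ∩ A₂ ⊆ {u, v})
    (hAuniv : A₁ ∪ A₂ = Set.univ) (hu : u ∉ S) (hv : v ∉ S) :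
    numComp G S ≤ numComp G (S ∩ A₁) + numComp G (S ∩ A₂) := by
  classical
  set H := G.induce Sᶜ
  set u' : ↥Sᶜ := ⟨u, hu⟩
  set v' : ↥Sᶜ := ⟨v, hv⟩
  have havoid : ∀ z, ¬H.Reachable z u' → ¬H.Reachable z v' →
      ∀ y, H.Reachable z y → (y : V) ∉ A₁ ∩ A₂ := by
    rintro z hzu hzv y hzy hy
    rcases hAint hy with hyu | hyv
    · exact hzu (by rwa [show y = u' from Subtype.ext hyu] at hzy)
    · exact hzv (by rwa [show y = v' from Subtype.ext hyv] at hzy)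
  -- Components through `u` go left, those through `v` right, the others to their own side.
  let φ : ↥Sᶜ →
      (G.induce (S ∩ A₁)ᶜ).ConnectedComponent ⊕ (G.induce (S ∩ A₂)ᶜ).ConnectedComponent :=
    fun z => if H.Reachable z u' ∨ ¬H.Reachable z v' ∧ (z : V) ∈ A₁
      then .inl ((G.induce _).connectedComponentMk (Set.inclusion compl_subset_compl_inter_left z))
      else .inr ((G.induce _).connectedComponentMk (Set.inclusion compl_subset_compl_inter_left z))
  have hφ : ∀ z z', φ z = φ z' → H.Reachable z z' := by
    intro z z' h
    have hG' : G = G₂ ⊔ G₁ := hG.trans (sup_comm _ _)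
    have hleft : ∀ z, H.Reachable z u' ∨ ¬H.Reachable z v' ∧ (z : V) ∈ A₁ →
        H.Reachable z u' ∨ (z : V) ∈ A₁ ∧ ∀ y, H.Reachable z y → (y : V) ∉ A₁ ∩ A₂ := by
      rintro z (hzu | ⟨hzv, hzA⟩)
      · exact .inl hzu
      · by_cases hzu : H.Reachable z u'
        · exact .inl hzu
        · exact .inr ⟨hzA, havoid z hzu hzv⟩
    have hright : ∀ z, ¬(H.Reachable z u' ∨ ¬H.Reachable z v' ∧ (z : V) ∈ A₁) →
        H.Reachable z v' ∨ (z : V) ∈ A₂ ∧ ∀ y, H.Reachable z y → (y : V) ∉ A₂ ∩ A₁ := by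
      intro z hz
      push Not at hz
      by_cases hzv : H.Reachable z v'
      · exact .inl hzv
      · have hzA₂ : (z : V) ∈ A₂ :=
          ((hAuniv ▸ Set.mem_univ (z : V) : (z : V) ∈ A₁ ∪ A₂)).resolve_left (hz.2 hzv)
        exact .inr ⟨hzA₂, fun y hzy hy => havoid z hz.1 hzv y hzy ⟨hy.2, hy.1⟩⟩
    simp only [φ] at h
    split_ifs at h with hz hz' hz'
    · exact reachable_of_reachable_induce_compl_inter_of_anchor hG hsupp₁ hsupp₂
        (hleft z hz) (hleft z' hz') (ConnectedComponent.exact (Sum.inl_injective h))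
    · exact reachable_of_reachable_induce_compl_inter_of_anchor hG' hsupp₂ hsupp₁
        (hright z hz) (hright z' hz') (ConnectedComponent.exact (Sum.inr_injective h))
  have hinj : Function.Injective fun C : H.ConnectedComponent => φ (Quot.out C) := by
    intro C D h
    rw [← Quot.out_eq C, ← Quot.out_eq D]
    exact ConnectedComponent.sound (hφ _ _ h)
  calc numComp G S = Nat.card H.ConnectedComponent := rfl
    _ ≤ Nat.card (_ ⊕ _) := Nat.card_le_card_of_injective _ hinj
    _ = numComp G (S ∩ A₁) + numComp G (S ∩ A₂) := Nat.card_sum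

end TwoSeparation

theorem toughSet_ratio_eq_of_two_cut_general {V : Type*} [Fintype V]
    (G G₁ G₂ : SimpleGraph V) (A₁ A₂ : Set V) (u v : V)
    (hG : G = G₁ ⊔ G₂)
    (hsupp₁ : G₁.support ⊆ A₁) (hsupp₂ : G₂.support ⊆ A₂)
    (hAint : A₁ ∩ A₂ = {u, v}) (hAuniv : A₁ ∪ A₂ = Set.univ)
    (htough : toughness G < 1)
    (S : Set V) (hS : IsToughSet G S) (hSuv : S ∩ {u, v} = ∅)
    (h₁ : (S ∩ A₁).Nonempty) (h₂ : (S ∩ A₂).Nonempty) :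
    ((S ∩ A₁).ncard : ℝ) / (numComp G (S ∩ A₁) : ℝ) = toughness G ∧
    ((S ∩ A₂).ncard : ℝ) / (numComp G (S ∩ A₂) : ℝ) = toughness G := by
  have hu : u ∉ S := fun hu => hSuv.subset ⟨hu, .inl rfl⟩
  have hv : v ∉ S := fun hv => hSuv.subset ⟨hv, .inr rfl⟩
  have hncard : (S.ncard : ℝ) = (S ∩ A₁).ncard + (S ∩ A₂).ncard := by
    have hdisj : Disjoint (S ∩ A₁) (S ∩ A₂) := Set.disjoint_left.mpr
      fun x ⟨hxS, hx₁⟩ ⟨_, hx₂⟩ => hSuv.subset ⟨hxS, hAint.subset ⟨hx₁, hx₂⟩⟩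
    have hsplit : S = S ∩ A₁ ∪ S ∩ A₂ := by
      rw [← Set.inter_union_distrib_left, hAuniv, Set.inter_univ]
    conv_lhs => rw [hsplit]
    exact_mod_cast Set.ncard_union_eq hdisj
  have hcount : (numComp G S : ℝ) ≤ numComp G (S ∩ A₁) + numComp G (S ∩ A₂) := by
    exact_mod_cast numComp_le_numComp_inter_add_numComp_inter hG hsupp₁ hsupp₂ hAint.subset
      hAuniv hu hv
  have hle₁ := toughness_mul_numComp_le_ncard_of_nonempty htough h₁ (Set.toFinite _)
  have hle₂ := toughness_mul_numComp_le_ncard_of_nonempty htough h₂ (Set.toFinite _)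
  have hsum := mul_le_mul_of_nonneg_left hcount (toughness_nonneg G)
  rw [← hS.2] at hsum
  exact ⟨ncard_div_numComp_eq_toughness htough h₁ (Set.toFinite _) (by linarith),
    ncard_div_numComp_eq_toughness htough h₂ (Set.toFinite _) (by linarith)⟩

/-- If `G = G₁ ∪ G₂` with `V(G₁) ∩ V(G₂) = {u, v}`, disjoint edge sets, `τ(G) < 1`, and `S`
is a tough set with `S ∩ {u, v} = ∅` meeting both `V(G₁)` and `V(G₂)`, then with
`Sᵢ = S ∩ V(Gᵢ)` we have `|S₁|/c(G−S₁) = |S₂|/c(G−S₂) = τ(G)`. -/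
theorem toughSet_ratio_eq_of_two_cut {V : Type*} [Fintype V]
    (G G₁ G₂ : SimpleGraph V) (A₁ A₂ : Set V) (u v : V) (huv : u ≠ v)
    (hG : G = G₁ ⊔ G₂) (hEdisj : Disjoint G₁.edgeSet G₂.edgeSet)
    (hsupp₁ : G₁.support ⊆ A₁) (hsupp₂ : G₂.support ⊆ A₂)
    (hAint : A₁ ∩ A₂ = {u, v}) (hAuniv : A₁ ∪ A₂ = Set.univ)
    (hconn : G.Connected) (htough : toughness G < 1)
    (S : Set V) (hS : IsToughSet G S) (hSuv : S ∩ {u, v} = ∅)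
    (h₁ : (S ∩ A₁).Nonempty) (h₂ : (S ∩ A₂).Nonempty) :
    ((S ∩ A₁).ncard : ℝ) / (numComp G (S ∩ A₁) : ℝ) = toughness G ∧
    ((S ∩ A₂).ncard : ℝ) / (numComp G (S ∩ A₂) : ℝ) = toughness G :=
  toughSet_ratio_eq_of_two_cut_general G G₁ G₂ A₁ A₂ u v hG hsupp₁ hsupp₂ hAint hAuniv htough S hS
    hSuv h₁ h₂
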